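/- arXiv:2109.09651 — 2 statements merged into one kernel-verified Lean document; each statement's English description precedes it below -/
import Mathlib

section
/- (Global solvability of the eikonal equation.) Let ν_n : 𝕋 × ℝ → ℝ (n ∈ ℕ) be C¹ functions such that for fixed (ξ,k), n ↦ ν_n(ξ,k) is strictly increasing, ν_n(ξ,k) ≥ m(n+1/2), ν_n(ξ,k) → b₋(n+1/2) as k → -∞ and → b₊(n+1/2) as k → +∞, uniformly in ξ. Let λ ∉ Σ, where Σ = σ_bulk ∪ σ_sing, σ_bulk = {b₋(n+1/2)} ∪ {b₊(n+1/2)} and σ_sing = {λ : ∃ n, (ξ,k) with ν_n(ξ,k) = λ and ∂_k ν_n(ξ,k) = 0}. Then there exist N ∈ ℕ and C¹ functions k₁, …, k_N : 𝕋 → ℝ such that for each j there exists n_j ∈ ℕ with ν_{n_j}(ξ, k_j(ξ)) = λ for all ξ ∈ 𝕋, and these exhaust all solutions: for each ξ the set {k : ∃ n, ν_n(ξ,k) = λ} equals {k₁(ξ), …, k_N(ξ)}. -/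
/-! For a single band `ν_n`, the implicit function theorem shows that near any `ξ₀` the level
set `{ν_n = λ}` consists of finitely many `C¹` branches, strictly ordered because they are
distinct at `ξ₀`; the tube lemma over the compact range of admissible `k` shows that no other
solutions appear nearby. Hence the number of solutions is locally constant, so constant, and the
increasing enumeration of the fiber is `C¹`. It is `1`-periodic because the fiber is: ordering
the solutions prevents the branches from being permuted around the circle. Only the finitely
many bands with `m (n + 1/2) ≤ λ` contribute. -/

open Filter Topology Set

section LevelSets

variable {E : Type*} [NormedAddCommGroup E] [NormedSpace ℝ E] [CompleteSpace E]
  {f : E → ℝ → ℝ} {c : ℝ}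

theorem finite_setOf_eq_of_deriv_ne_zero {φ : ℝ → ℝ} {K : Set ℝ} (hφ : Differentiable ℝ φ)
    (hK : IsCompact K) (hsub : {k | φ k = c} ⊆ K) (hd : ∀ k, φ k = c → deriv φ k ≠ 0) :
    {k | φ k = c}.Finite := by
  refine (hK.of_isClosed_subset (isClosed_eq hφ.continuous continuous_const) hsub).finite ?_
  rw [isDiscrete_iff_nhdsNE]
  exact fun k hk => inf_principal_eq_bot.mpr ((hφ k).hasDerivAt.eventually_ne (hd k hk))

theorem exists_implicit_branch (hf : ContDiff ℝ 1 fun p : E × ℝ => f p.1 p.2) {ξ₀ : E} {k₀ : ℝ}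
    (hsol : f ξ₀ k₀ = c) (hd : deriv (f ξ₀) k₀ ≠ 0) :
    ∃ g : E → ℝ, ContDiffAt ℝ 1 g ξ₀ ∧ g ξ₀ = k₀ ∧
      ∀ᶠ v in 𝓝 (ξ₀, k₀), f v.1 v.2 = c ↔ g v.1 = v.2 := by
  set F : E × ℝ → ℝ := fun p => f p.1 p.2
  have cdF : ContDiffAt ℝ 1 F (ξ₀, k₀) := hf.contDiffAt
  have hpartial : HasDerivAt (f ξ₀) (fderiv ℝ F (ξ₀, k₀) (0, 1)) k₀ :=
    (cdF.differentiableAt one_ne_zero).hasFDerivAt.comp_hasDerivAt k₀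
      ((hasDerivAt_const k₀ ξ₀).prodMk (hasDerivAt_id k₀))
  have hinv : (fderiv ℝ F (ξ₀, k₀) ∘L .inr ℝ E ℝ).IsInvertible := by
    refine ⟨ContinuousLinearEquiv.unitsEquivAut ℝ (Units.mk0 _ hd), ContinuousLinearMap.ext_ring ?_⟩
    simp [hpartial.deriv]
  refine ⟨cdF.implicitFunction one_ne_zero hinv, cdF.contDiffAt_implicitFunction one_ne_zero hinv,
    cdF.implicitFunction_apply_self one_ne_zero hinv, ?_⟩
  simpa [F, hsol] using cdF.eventually_apply_eq_iff_implicitFunction one_ne_zero hinv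

theorem eventually_setOf_eq_eq_range_branches (hf : ContDiff ℝ 1 fun p : E × ℝ => f p.1 p.2)
    {K : Set ℝ} (hK : IsCompact K) (hsub : ∀ ξ k, f ξ k = c → k ∈ K)
    (hd : ∀ ξ k, f ξ k = c → deriv (f ξ) k ≠ 0) (ξ₀ : E) :
    ∃ (r : ℕ) (g : Fin r → E → ℝ), (∀ j, ContDiffAt ℝ 1 (g j) ξ₀) ∧
      ∀ᶠ ξ in 𝓝 ξ₀, StrictMono (fun j => g j ξ) ∧ {k | f ξ k = c} = range fun j => g j ξ := by
  have hdiff : Differentiable ℝ (f ξ₀) := fun k =>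
    ((hf.differentiable one_ne_zero).comp (differentiable_const ξ₀ |>.prodMk differentiable_id)) k
  have hfin := finite_setOf_eq_of_deriv_ne_zero hdiff hK (fun k => hsub ξ₀ k) (hd ξ₀)
  set kv := hfin.toFinset.orderEmbOfFin rfl
  have hkv : range kv = {k | f ξ₀ k = c} := by simp [kv, Finset.range_orderEmbOfFin]
  have hkv_sol : ∀ j, f ξ₀ (kv j) = c := fun j => hkv.subset (mem_range_self j)
  choose g hgC1 hgξ₀ hgiff using fun j => exists_implicit_branch hf (hkv_sol j) (hd _ _ (hkv_sol j))
  have hlim : ∀ j, Tendsto (fun ξ => (ξ, g j ξ)) (𝓝 ξ₀) (𝓝 (ξ₀, kv j)) := fun j => by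
    have := continuousAt_id.prodMk (hgC1 j).continuousAt
    rwa [ContinuousAt, id, hgξ₀ j] at this
  have hmono : ∀ᶠ ξ in 𝓝 ξ₀, StrictMono fun j => g j ξ := by
    have hlt : ∀ i j, i < j → ∀ᶠ ξ in 𝓝 ξ₀, g i ξ < g j ξ := fun i j hij =>
      (hgC1 i).continuousAt.eventually_lt (hgC1 j).continuousAt
        (by simpa [hgξ₀] using kv.strictMono hij)
    filter_upwards [eventually_all.2 fun i => eventually_all.2 fun j =>
      eventually_imp_distrib_left.2 (hlt i j)] with ξ h i j hij using h i j hij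
  have hsol : ∀ᶠ ξ in 𝓝 ξ₀, ∀ j, f ξ (g j ξ) = c :=
    eventually_all.2 fun j => ((hlim j).eventually (hgiff j)).mono fun _ h => h.2 rfl
  -- The tube lemma over the compact `K` rules out solutions away from the branches.
  have hexh : ∀ᶠ ξ in 𝓝 ξ₀, ∀ k ∈ K, f ξ k = c → ∃ j, g j ξ = k := by
    refine hK.eventually_forall_of_forall_eventually fun k _ => ?_
    by_cases hk : f ξ₀ k = c
    · obtain ⟨j, rfl⟩ : k ∈ range kv := by rwa [hkv]
      exact (hgiff j).mono fun v hv hvc => ⟨j, hv.1 hvc⟩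
    · exact (hf.continuous.continuousAt.eventually_ne hk).mono fun v hv hvc => absurd hvc hv
  refine ⟨_, g, hgC1, ?_⟩
  filter_upwards [hmono, hsol, hexh] with ξ hm hs he
  refine ⟨hm, Set.ext fun k => ⟨fun hk => he k (hsub ξ k hk) hk, ?_⟩⟩
  rintro ⟨j, rfl⟩
  exact hs j

theorem exists_strictMono_branches [PreconnectedSpace E]
    (hf : ContDiff ℝ 1 fun p : E × ℝ => f p.1 p.2)
    {K : Set ℝ} (hK : IsCompact K) (hsub : ∀ ξ k, f ξ k = c → k ∈ K)
    (hd : ∀ ξ k, f ξ k = c → deriv (f ξ) k ≠ 0) :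
    ∃ (N : ℕ) (kk : Fin N → E → ℝ), (∀ j, ContDiff ℝ 1 (kk j)) ∧
      ∀ ξ, StrictMono (fun j => kk j ξ) ∧ {k | f ξ k = c} = range fun j => kk j ξ := by
  have hloc := eventually_setOf_eq_eq_range_branches hf hK hsub hd
  have hcard : ∀ {r : ℕ} {ξ : E} {g : Fin r → ℝ}, StrictMono g → {k | f ξ k = c} = range g →
      {k | f ξ k = c}.ncard = r := fun hm hr => by
    rw [hr, ncard_range_of_injective hm.injective, Nat.card_fin]
  have hconst : IsLocallyConstant fun ξ => {k | f ξ k = c}.ncard := by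
    refine (IsLocallyConstant.iff_eventually_eq _).2 fun ξ₀ => ?_
    obtain ⟨r, g, -, h⟩ := hloc ξ₀
    filter_upwards [h] with ξ hξ
    rw [hcard hξ.1 hξ.2, hcard h.self_of_nhds.1 h.self_of_nhds.2]
  set N := {k | f 0 k = c}.ncard
  have hloc' : ∀ ξ₀, ∃ g : Fin N → E → ℝ, (∀ j, ContDiffAt ℝ 1 (g j) ξ₀) ∧
      ∀ᶠ ξ in 𝓝 ξ₀, StrictMono (fun j => g j ξ) ∧ {k | f ξ k = c} = range fun j => g j ξ := by
    intro ξ₀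
    obtain ⟨r, g, hg, h⟩ := hloc ξ₀
    obtain rfl : r = N := by
      rw [← hcard h.self_of_nhds.1 h.self_of_nhds.2]
      exact hconst.apply_eq_of_preconnectedSpace ξ₀ 0
    exact ⟨g, hg, h⟩
  have henum : ∀ ξ, ∃ e : Fin N → ℝ, StrictMono e ∧ {k | f ξ k = c} = range e := fun ξ =>
    (hloc' ξ).elim fun g hg => ⟨fun j => g j ξ, hg.2.self_of_nhds⟩
  choose e he using henum
  refine ⟨N, fun j ξ => e ξ j, fun j => contDiff_iff_contDiffAt.2 fun ξ₀ => ?_, he⟩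
  obtain ⟨g, hg, h⟩ := hloc' ξ₀
  refine (hg j).congr_of_eventuallyEq ?_
  filter_upwards [h] with ξ hξ
  exact congrFun (((he ξ).1.range_inj hξ.1).1 ((he ξ).2.symm.trans hξ.2)) j

end LevelSets

theorem exists_forall_mem_Icc_of_tendsto_ne {α : Type*} {φ : α → ℝ → ℝ} {a b c : ℝ}
    (hbot : ∀ ε > (0:ℝ), ∃ K : ℝ, ∀ ξ k, k ≤ -K → |φ ξ k - a| < ε)
    (htop : ∀ ε > (0:ℝ), ∃ K : ℝ, ∀ ξ k, K ≤ k → |φ ξ k - b| < ε) (ha : c ≠ a) (hb : c ≠ b) :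
    ∃ R : ℝ, ∀ ξ k, φ ξ k = c → k ∈ Icc (-R) R := by
  obtain ⟨K₁, hK₁⟩ := hbot _ (abs_pos.2 (sub_ne_zero.2 ha))
  obtain ⟨K₂, hK₂⟩ := htop _ (abs_pos.2 (sub_ne_zero.2 hb))
  refine ⟨max K₁ K₂, fun ξ k hk => ⟨le_of_not_gt fun h => ?_, le_of_not_gt fun h => ?_⟩⟩
  · exact (hK₁ ξ k (by linarith [le_max_left K₁ K₂])).ne (by rw [hk])
  · exact (hK₂ ξ k (by linarith [le_max_right K₁ K₂])).ne (by rw [hk])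

theorem exists_index_bound_of_lower_bound {α β : Type*} {ν : ℕ → α → β → ℝ} {m : ℝ} (hm : 0 < m)
    (hlb : ∀ (n : ℕ) ξ k, m * ((n : ℝ) + 1/2) ≤ ν n ξ k) (lam : ℝ) :
    ∃ n₀ : ℕ, ∀ n ξ k, ν n ξ k = lam → n < n₀ := by
  obtain ⟨n₀, hn₀⟩ := exists_nat_gt (lam / m)
  refine ⟨n₀, fun n ξ k hk => (Nat.cast_lt (α := ℝ)).1 ?_⟩
  have := hlb n ξ k
  rw [hk] at this
  rw [div_lt_iff₀ hm] at hn₀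
  nlinarith

theorem eikonal_global_solvability_general
    (ν : ℕ → ℝ → ℝ → ℝ) (m bp bm lam : ℝ)
    (hm : 0 < m)
    (hC1 : ∀ n, ContDiff ℝ 1 fun p : ℝ × ℝ => ν n p.1 p.2)
    (hper : ∀ (n : ℕ) (ξ k : ℝ), ν n (ξ + 1) k = ν n ξ k)
    (hlb : ∀ (n : ℕ) (ξ k : ℝ), m * ((n : ℝ) + 1/2) ≤ ν n ξ k)
    (hlim_bot : ∀ (n : ℕ), ∀ ε > (0:ℝ), ∃ K : ℝ, ∀ ξ k, k ≤ -K →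
      |ν n ξ k - bm * ((n : ℝ) + 1/2)| < ε)
    (hlim_top : ∀ (n : ℕ), ∀ ε > (0:ℝ), ∃ K : ℝ, ∀ ξ k, K ≤ k →
      |ν n ξ k - bp * ((n : ℝ) + 1/2)| < ε)
    -- λ avoids the bulk spectrum σ_bulk
    (hbulk : ∀ n : ℕ, lam ≠ bm * ((n : ℝ) + 1/2) ∧ lam ≠ bp * ((n : ℝ) + 1/2))
    -- λ avoids the singular set σ_sing : ∂_k ν_n ≠ 0 at every solution
    (hsing : ∀ (n : ℕ) (ξ k : ℝ), ν n ξ k = lam → deriv (fun k' => ν n ξ k') k ≠ 0) :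
    ∃ (N : ℕ) (kk : Fin N → ℝ → ℝ),
      (∀ j, ContDiff ℝ 1 (kk j) ∧ (∀ ξ, kk j (ξ + 1) = kk j ξ) ∧
        ∃ n : ℕ, ∀ ξ, ν n ξ (kk j ξ) = lam) ∧
      ∀ ξ k, (∃ n : ℕ, ν n ξ k = lam) ↔ ∃ j, kk j ξ = k := by
  obtain ⟨n₀, hn₀⟩ := exists_index_bound_of_lower_bound hm hlb lam
  have hbranches : ∀ n, ∃ (N : ℕ) (kk : Fin N → ℝ → ℝ), (∀ j, ContDiff ℝ 1 (kk j)) ∧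
      ∀ ξ, StrictMono (fun j => kk j ξ) ∧ {k | ν n ξ k = lam} = range fun j => kk j ξ := by
    intro n
    obtain ⟨R, hR⟩ := exists_forall_mem_Icc_of_tendsto_ne (hlim_bot n) (hlim_top n)
      (hbulk n).1 (hbulk n).2
    exact exists_strictMono_branches (hC1 n) isCompact_Icc hR (hsing n)
  choose N kk hkk_C1 hkk using hbranches
  have hkk_sol : ∀ n j ξ, ν n ξ (kk n j ξ) = lam := fun n j ξ =>
    ((hkk n ξ).2 ▸ mem_range_self j :)
  -- Both sides enumerate the same fiber in increasing order.
  have hkk_per : ∀ n j ξ, kk n j (ξ + 1) = kk n j ξ := fun n j ξ =>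
    congrFun (((hkk n (ξ + 1)).1.range_inj (hkk n ξ).1).1
      (by rw [← (hkk n _).2, ← (hkk n _).2]; simp only [hper])) j
  let e := Fintype.equivFin (Σ n : Fin n₀, Fin (N n))
  refine ⟨_, fun j => kk (e.symm j).1 (e.symm j).2, fun j => ⟨hkk_C1 _ _, hkk_per _ _,
    _, hkk_sol _ _⟩, fun ξ k => ⟨?_, ?_⟩⟩
  · rintro ⟨n, hk⟩
    obtain ⟨i, rfl⟩ : k ∈ range fun i => kk n i ξ := (hkk n ξ).2 ▸ hk
    exact ⟨e ⟨⟨n, hn₀ n ξ _ hk⟩, i⟩,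
      congrArg (fun p : Σ n : Fin n₀, Fin (N n) => kk p.1 p.2 ξ) (e.symm_apply_apply _)⟩
  · rintro ⟨j, rfl⟩
    exact ⟨_, hkk_sol _ _ ξ⟩

/-- global solvability of the eikonal equation: for `λ` outside the
singular set `Σ = σ_bulk ∪ σ_sing`, there are finitely many globally defined `C¹`
curves `k₁,…,k_N : 𝕋 → ℝ` solving `ν_{n_j}(ξ, k_j(ξ)) = λ`, and they exhaust all
solutions of `ν_n(ξ,k) = λ`.  The circle `𝕋` is modeled by `1`-periodic functions. -/
theorem eikonal_global_solvability
    (ν : ℕ → ℝ → ℝ → ℝ) (m bp bm lam : ℝ)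
    (hm : 0 < m) (hbp : 0 < bp) (hbm : 0 < bm)
    (hC1 : ∀ n, ContDiff ℝ 1 fun p : ℝ × ℝ => ν n p.1 p.2)
    (hper : ∀ (n : ℕ) (ξ k : ℝ), ν n (ξ + 1) k = ν n ξ k)
    (hmono : ∀ ξ k, StrictMono fun n : ℕ => ν n ξ k)
    (hlb : ∀ (n : ℕ) (ξ k : ℝ), m * ((n : ℝ) + 1/2) ≤ ν n ξ k)
    (hlim_bot : ∀ (n : ℕ), ∀ ε > (0:ℝ), ∃ K : ℝ, ∀ ξ k, k ≤ -K →
      |ν n ξ k - bm * ((n : ℝ) + 1/2)| < ε)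
    (hlim_top : ∀ (n : ℕ), ∀ ε > (0:ℝ), ∃ K : ℝ, ∀ ξ k, K ≤ k →
      |ν n ξ k - bp * ((n : ℝ) + 1/2)| < ε)
    -- λ avoids the bulk spectrum σ_bulk
    (hbulk : ∀ n : ℕ, lam ≠ bm * ((n : ℝ) + 1/2) ∧ lam ≠ bp * ((n : ℝ) + 1/2))
    -- λ avoids the singular set σ_sing : ∂_k ν_n ≠ 0 at every solution
    (hsing : ∀ (n : ℕ) (ξ k : ℝ), ν n ξ k = lam → deriv (fun k' => ν n ξ k') k ≠ 0) :
    ∃ (N : ℕ) (kk : Fin N → ℝ → ℝ),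
      (∀ j, ContDiff ℝ 1 (kk j) ∧ (∀ ξ, kk j (ξ + 1) = kk j ξ) ∧
        ∃ n : ℕ, ∀ ξ, ν n ξ (kk j ξ) = lam) ∧
      ∀ ξ k, (∃ n : ℕ, ν n ξ k = lam) ↔ ∃ j, kk j ξ = k :=
  eikonal_global_solvability_general ν m bp bm lam hm hC1 hper hlb hlim_bot hlim_top hbulk hsing
end

section
/- (Separation of eikonal branches.) In the setting of the previous statement, with λ ∉ Σ and k₁, …, k_N : 𝕋 → ℝ the continuous curves solving ν_{n_j}(ξ, k_j(ξ)) = λ, there exists δ > 0 such that |k_i(ξ) - k_j(ξ)| ≥ δ for all ξ ∈ 𝕋 and all i ≠ j. -/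
/-!
If two branches touched at some `ξ₀`, strict monotonicity of `n ↦ ν_n` forces them to solve the
same equation `ν_n(ξ, k) = λ`. Since `∂_k ν_n ≠ 0` on the level set, and this condition is open,
Rolle's theorem makes the solution `k` of `ν_n(ξ, k) = λ` locally unique near any point of the
level set; hence the set where the two branches agree is open, and being closed and nonempty it
is all of `ℝ`. So distinct branches never touch, and compactness of the circle together with the
finiteness of the family turns this into a uniform gap.
-/

open Set Filter Topology Metric

theorem Set.OrdConnected.injOn_of_deriv_ne_zero {f : ℝ → ℝ} {s : Set ℝ} (hs : s.OrdConnected)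
    (hf : Differentiable ℝ f) (hf' : ∀ x ∈ s, deriv f x ≠ 0) : InjOn f s := by
  suffices ∀ a ∈ s, ∀ b ∈ s, a < b → f a ≠ f b by
    intro a ha b hb hab
    by_contra hne
    rcases lt_or_gt_of_ne hne with h | h
    · exact this a ha b hb h hab
    · exact this b hb a ha h hab.symm
  intro a ha b hb hab hfab
  obtain ⟨c, hc, hc0⟩ := exists_deriv_eq_zero hab hf.continuous.continuousOn hfab
  exact hf' c (hs.out ha hb (Ioo_subset_Icc_self hc)) hc0

section LevelSet

variable {F : ℝ × ℝ → ℝ}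

theorem Differentiable.differentiable_snd (hF : Differentiable ℝ F) (ξ : ℝ) :
    Differentiable ℝ fun k => F (ξ, k) :=
  hF.comp (differentiable_const ξ |>.prodMk differentiable_id)

theorem DifferentiableAt.deriv_snd_eq_fderiv {p : ℝ × ℝ} (hF : DifferentiableAt ℝ F p) :
    deriv (fun k => F (p.1, k)) p.2 = fderiv ℝ F p (0, 1) :=
  (hF.hasFDerivAt.comp_hasDerivAt p.2
    ((hasDerivAt_const p.2 p.1).prodMk (hasDerivAt_id p.2))).deriv

theorem ContDiff.continuous_deriv_snd (hF : ContDiff ℝ 1 F) :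
    Continuous fun p : ℝ × ℝ => deriv (fun k => F (p.1, k)) p.2 := by
  simp only [fun p => (hF.differentiable one_ne_zero p).deriv_snd_eq_fderiv]
  exact (hF.continuous_fderiv one_ne_zero).clm_apply continuous_const

variable {c : ℝ} {g h : ℝ → ℝ}

theorem eventuallyEq_of_levelSet (hF : ContDiff ℝ 1 F) {x : ℝ} (hg : ContinuousAt g x)
    (hh : ContinuousAt h x) (hgF : ∀ y, F (y, g y) = c) (hhF : ∀ y, F (y, h y) = c)
    (hx : g x = h x) (hD : deriv (fun k => F (x, k)) (g x) ≠ 0) : g =ᶠ[𝓝 x] h := by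
  obtain ⟨ε, hε, hball⟩ :=
    Metric.isOpen_iff.1 (isOpen_ne_fun hF.continuous_deriv_snd continuous_const) (x, g x) hD
  rw [← ball_prod_same] at hball
  have hgε : ∀ᶠ y in 𝓝 x, g y ∈ ball (g x) ε := hg.preimage_mem_nhds (ball_mem_nhds _ hε)
  have hhε : ∀ᶠ y in 𝓝 x, h y ∈ ball (g x) ε := hh.preimage_mem_nhds (hx ▸ ball_mem_nhds _ hε)
  filter_upwards [ball_mem_nhds x hε, hgε, hhε] with y hy hgy hhy
  have hinj : InjOn (fun k => F (y, k)) (ball (g x) ε) := by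
    refine Set.OrdConnected.injOn_of_deriv_ne_zero ?_
      ((hF.differentiable one_ne_zero).differentiable_snd y) fun k hk => hball (mk_mem_prod hy hk)
    rw [Real.ball_eq_Ioo]
    exact ordConnected_Ioo
  exact hinj hgy hhy ((hgF y).trans (hhF y).symm)

theorem eq_of_levelSet_of_eq (hF : ContDiff ℝ 1 F)
    (hreg : ∀ ξ k, F (ξ, k) = c → deriv (fun k' => F (ξ, k')) k ≠ 0)
    (hg : Continuous g) (hh : Continuous h) (hgF : ∀ y, F (y, g y) = c)
    (hhF : ∀ y, F (y, h y) = c) {x : ℝ} (hx : g x = h x) : g = h := by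
  have hopen : IsOpen {y | g y = h y} := isOpen_iff_mem_nhds.2 fun y hy =>
    eventuallyEq_of_levelSet hF hg.continuousAt hh.continuousAt hgF hhF hy (hreg _ _ (hgF y))
  have huniv := IsClopen.eq_univ ⟨isClosed_eq hg hh, hopen⟩ ⟨x, hx⟩
  exact funext fun y => (eq_univ_iff_forall.1 huniv y :)

end LevelSet

theorem Function.Periodic.exists_pos_le_abs {f : ℝ → ℝ} {T : ℝ} (hper : f.Periodic T)
    (hT : T ≠ 0) (hf : Continuous f) (hf0 : ∀ x, f x ≠ 0) : ∃ δ > 0, ∀ x, δ ≤ |f x| := by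
  have hcpt : IsCompact (range fun x => |f x|) :=
    Function.Periodic.compact_of_continuous (fun x => by simp only [hper x]) hT hf.abs
  obtain ⟨_, ⟨x₀, rfl⟩, hmin⟩ := hcpt.exists_isLeast (range_nonempty _)
  exact ⟨|f x₀|, abs_pos.2 (hf0 x₀), fun x => hmin ⟨x, rfl⟩⟩

theorem exists_pos_forall_le_of_finite {ι α : Type*} [Finite ι] {f : ι → α → ℝ}
    (h : ∀ i, ∃ δ > 0, ∀ a, δ ≤ f i a) : ∃ δ > 0, ∀ i a, δ ≤ f i a := by
  choose δ hδ hle using h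
  have hsmall : ∀ᶠ ε in 𝓝[>] (0 : ℝ), ∀ i, ε ≤ δ i :=
    eventually_all.2 fun i => mem_of_superset (Ioc_mem_nhdsGT (hδ i)) fun _ hε => hε.2
  obtain ⟨ε, hεδ, hε⟩ := (hsmall.and self_mem_nhdsWithin).exists
  exact ⟨ε, hε, fun i a => (hεδ i).trans (hle i a)⟩

theorem eikonal_branch_separation_general
    (ν : ℕ → ℝ → ℝ → ℝ) (lam : ℝ)
    (hC1 : ∀ n, ContDiff ℝ 1 fun p : ℝ × ℝ => ν n p.1 p.2)
    (hmono : ∀ ξ k, StrictMono fun n : ℕ => ν n ξ k)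
    -- λ avoids σ_sing : ∂_k ν_n ≠ 0 at every solution of ν_n = λ
    (hsing : ∀ (n : ℕ) (ξ k : ℝ), ν n ξ k = lam → deriv (fun k' => ν n ξ k') k ≠ 0)
    (N : ℕ) (kk : Fin N → ℝ → ℝ)
    (hcont : ∀ j, Continuous (kk j))
    (hkper : ∀ j ξ, kk j (ξ + 1) = kk j ξ)
    (hsol : ∀ j, ∃ n : ℕ, ∀ ξ, ν n ξ (kk j ξ) = lam)
    (hdistinct : ∀ i j, i ≠ j → kk i ≠ kk j) :
    ∃ δ > (0:ℝ), ∀ ξ : ℝ, ∀ i j, i ≠ j → δ ≤ |kk i ξ - kk j ξ| := by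
  have hdisjoint : ∀ i j, i ≠ j → ∀ ξ, kk i ξ - kk j ξ ≠ 0 := by
    intro i j hij ξ hξ
    obtain ⟨ni, hni⟩ := hsol i
    obtain ⟨nj, hnj⟩ := hsol j
    rw [sub_eq_zero] at hξ
    obtain rfl : ni = nj :=
      (hmono ξ (kk j ξ)).injective (by rw [← hξ, hni, hξ, hnj])
    exact hdistinct i j hij
      (eq_of_levelSet_of_eq (hC1 ni) (hsing ni) (hcont i) (hcont j) hni hnj hξ)
  have hgap : ∀ p : {p : Fin N × Fin N // p.1 ≠ p.2},
      ∃ δ > 0, ∀ ξ, δ ≤ |kk p.1.1 ξ - kk p.1.2 ξ| := fun ⟨(i, j), hij⟩ =>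
    Function.Periodic.exists_pos_le_abs (fun ξ => by simp only [hkper]) one_ne_zero
      ((hcont i).sub (hcont j)) (hdisjoint i j hij)
  obtain ⟨δ, hδ, hle⟩ := exists_pos_forall_le_of_finite hgap
  exact ⟨δ, hδ, fun ξ i j hij => hle ⟨(i, j), hij⟩ ξ⟩

/-- separation of eikonal branches: for `λ ∉ Σ`, distinct continuous
periodic solution curves of the eikonal equation `ν_{n_j}(ξ, k_j(ξ)) = λ` are
uniformly separated: `|k_i(ξ) - k_j(ξ)| ≥ δ > 0` on all of `𝕋` for `i ≠ j`. -/
theorem eikonal_branch_separation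
    (ν : ℕ → ℝ → ℝ → ℝ) (lam : ℝ)
    (hC1 : ∀ n, ContDiff ℝ 1 fun p : ℝ × ℝ => ν n p.1 p.2)
    (hper : ∀ (n : ℕ) (ξ k : ℝ), ν n (ξ + 1) k = ν n ξ k)
    (hmono : ∀ ξ k, StrictMono fun n : ℕ => ν n ξ k)
    -- λ avoids σ_sing : ∂_k ν_n ≠ 0 at every solution of ν_n = λ
    (hsing : ∀ (n : ℕ) (ξ k : ℝ), ν n ξ k = lam → deriv (fun k' => ν n ξ k') k ≠ 0)
    (N : ℕ) (kk : Fin N → ℝ → ℝ)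
    (hcont : ∀ j, Continuous (kk j))
    (hkper : ∀ j ξ, kk j (ξ + 1) = kk j ξ)
    (hsol : ∀ j, ∃ n : ℕ, ∀ ξ, ν n ξ (kk j ξ) = lam)
    (hdistinct : ∀ i j, i ≠ j → kk i ≠ kk j) :
    ∃ δ > (0:ℝ), ∀ ξ : ℝ, ∀ i j, i ≠ j → δ ≤ |kk i ξ - kk j ξ| :=
  eikonal_branch_separation_general ν lam hC1 hmono hsing N kk hcont hkper hsol hdistinct
end
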